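/- arXiv:2403.05679 — 2 statements merged into one kernel-verified Lean document; each statement's English description precedes it below -/
import Mathlib

section
/- (proved in Lemma C.6) Let Σ and Σ̃ be p×p real symmetric matrices with ω = λ₁(Σ) − λ₂(Σ) > 0 and ‖Σ̃ − Σ‖_op < ω/2. Then every nonzero singular value of λ₁(Σ̃) I_p − Σ̃ is at least ω − 2‖Σ̃ − Σ‖_op, and consequently the Moore–Penrose pseudoinverse satisfies ‖(λ₁(Σ̃) I_p − Σ̃)⁺‖_op ≤ (ω − 2‖Σ̃ − Σ‖_op)^{-1}. -/
open MeasureTheory Filter Matrix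
open scoped RealInnerProductSpace ENNReal NNReal

noncomputable section
noncomputable section

/-- Euclidean column vectors. -/
abbrev Vec (p : ℕ) : Type := EuclideanSpace ℝ (Fin p)

/-- A matrix acting on Euclidean space. -/
def mApp {p : ℕ} (A : Matrix (Fin p) (Fin p) ℝ) (x : Vec p) : Vec p :=
  Matrix.toEuclideanLin A x

/-- The ℓ²→ℓ² operator (spectral) norm of a matrix. -/
def opNorm {p : ℕ} (A : Matrix (Fin p) (Fin p) ℝ) : ℝ :=
  ‖(Matrix.toEuclideanCLM (𝕜 := ℝ) A : EuclideanSpace ℝ (Fin p) →L[ℝ] EuclideanSpace ℝ (Fin p))‖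

/-- `k`-th largest eigenvalue (1-indexed) of a symmetric matrix, via the Courant–Fischer
max-min characterization. -/
def eigk {p : ℕ} (A : Matrix (Fin p) (Fin p) ℝ) (k : ℕ) : ℝ :=
  ⨆ V : {V : Submodule ℝ (Vec p) // Module.finrank ℝ V = k},
    ⨅ x : {x : Vec p // x ∈ V.1 ∧ ‖x‖ = 1}, ⟪mApp A x.1, x.1⟫

/-- `k`-th largest singular value (1-indexed) of a square matrix. -/
def sval {p : ℕ} (A : Matrix (Fin p) (Fin p) ℝ) (k : ℕ) : ℝ :=
  Real.sqrt (eigk (Aᵀ * A) k)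

/-- Moore–Penrose pseudoinverse of a real square matrix. -/
def pinv {p : ℕ} (A : Matrix (Fin p) (Fin p) ℝ) : Matrix (Fin p) (Fin p) ℝ := by
  classical
  exact if h : ∃ B, A * B * A = A ∧ B * A * B = B ∧ (A * B)ᵀ = A * B ∧ (B * A)ᵀ = B * A
    then h.choose else 0

namespace LemC6

variable {p : ℕ}

lemma mApp_clm (A : Matrix (Fin p) (Fin p) ℝ) (x : Vec p) :
    mApp A x = Matrix.toEuclideanCLM (𝕜 := ℝ) A x := rfl

lemma mApp_mul (A B : Matrix (Fin p) (Fin p) ℝ) (x : Vec p) :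
    mApp (A * B) x = mApp A (mApp B x) := by
  simp [mApp_clm, _root_.map_mul]

lemma mApp_add (A B : Matrix (Fin p) (Fin p) ℝ) (x : Vec p) :
    mApp (A + B) x = mApp A x + mApp B x := by
  simp [mApp_clm, map_add]

lemma mApp_sub (A B : Matrix (Fin p) (Fin p) ℝ) (x : Vec p) :
    mApp (A - B) x = mApp A x - mApp B x := by
  simp [mApp_clm, map_sub]

lemma mApp_smul_one (c : ℝ) (x : Vec p) :
    mApp (c • (1 : Matrix (Fin p) (Fin p) ℝ)) x = c • x := by
  simp only [mApp, _root_.map_smul, LinearMap.smul_apply]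
  congr 1
  rw [Matrix.toEuclideanLin_apply]
  simp

lemma mApp_lin_smul (A : Matrix (Fin p) (Fin p) ℝ) (c : ℝ) (x : Vec p) :
    mApp A (c • x) = c • mApp A x := by simp [mApp, _root_.map_smul]

lemma mApp_lin_add (A : Matrix (Fin p) (Fin p) ℝ) (x y : Vec p) :
    mApp A (x + y) = mApp A x + mApp A y := by simp [mApp, map_add]

lemma inner_transpose (A : Matrix (Fin p) (Fin p) ℝ) (x y : Vec p) :
    ⟪mApp Aᵀ x, y⟫ = ⟪x, mApp A y⟫ := by
  have h : Aᵀ = star A := by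
    simp [Matrix.star_eq_conjTranspose, Matrix.conjTranspose_eq_transpose_of_trivial]
  rw [h, mApp_clm, map_star, ContinuousLinearMap.star_eq_adjoint,
    ContinuousLinearMap.adjoint_inner_left, mApp_clm]

lemma inner_mApp_transpose_mul_self (A : Matrix (Fin p) (Fin p) ℝ) (x : Vec p) :
    ⟪mApp (Aᵀ * A) x, x⟫ = ‖mApp A x‖ ^ 2 := by
  rw [mApp_mul, inner_transpose, real_inner_comm, real_inner_self_eq_norm_sq]

lemma norm_mApp_le (A : Matrix (Fin p) (Fin p) ℝ) (x : Vec p) :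
    ‖mApp A x‖ ≤ opNorm A * ‖x‖ := by
  rw [mApp_clm]; exact (Matrix.toEuclideanCLM (𝕜 := ℝ) A).le_opNorm x

lemma abs_inner_mApp_le (A : Matrix (Fin p) (Fin p) ℝ) {x : Vec p} (hx : ‖x‖ = 1) :
    |⟪mApp A x, x⟫| ≤ opNorm A := by
  calc |⟪mApp A x, x⟫| ≤ ‖mApp A x‖ * ‖x‖ := abs_real_inner_le_norm _ _
    _ ≤ opNorm A * ‖x‖ * ‖x‖ := by
        have := norm_mApp_le A x
        nlinarith [norm_nonneg (mApp A x), norm_nonneg x]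
    _ = opNorm A := by rw [hx]; ring

lemma opNorm_nonneg (A : Matrix (Fin p) (Fin p) ℝ) : 0 ≤ opNorm A := norm_nonneg _

lemma opNorm_neg (A : Matrix (Fin p) (Fin p) ℝ) : opNorm (-A) = opNorm A := by
  unfold opNorm; rw [map_neg, norm_neg]

def Ray {p : ℕ} (A : Matrix (Fin p) (Fin p) ℝ) (V : Submodule ℝ (Vec p)) : ℝ :=
  ⨅ x : {x : Vec p // x ∈ V ∧ ‖x‖ = 1}, ⟪mApp A x.1, x.1⟫

lemma eigk_eq_iSup_Ray (A : Matrix (Fin p) (Fin p) ℝ) (k : ℕ) :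
    eigk A k = ⨆ V : {V : Submodule ℝ (Vec p) // Module.finrank ℝ V = k}, Ray A V.1 := rfl

lemma exists_unit_of_finrank_pos {V : Submodule ℝ (Vec p)} (h : 0 < Module.finrank ℝ V) :
    ∃ x, x ∈ V ∧ ‖x‖ = 1 := by
  have hVbot : V ≠ ⊥ := by
    intro hbot; rw [hbot] at h; simp at h
  obtain ⟨x, hxV, hx0'⟩ := Submodule.ne_bot_iff V |>.1 hVbot
  refine ⟨(‖x‖⁻¹ : ℝ) • x, V.smul_mem _ hxV, ?_⟩
  rw [norm_smul, norm_inv, norm_norm, inv_mul_cancel₀ (norm_ne_zero_iff.2 hx0')]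

lemma bddBelow_ray (A : Matrix (Fin p) (Fin p) ℝ) (V : Submodule ℝ (Vec p)) :
    BddBelow (Set.range fun x : {x : Vec p // x ∈ V ∧ ‖x‖ = 1} => ⟪mApp A x.1, x.1⟫) := by
  refine ⟨-(opNorm A), ?_⟩
  rintro r ⟨⟨x, hxV, hx1⟩, rfl⟩
  have := abs_inner_mApp_le A hx1
  simp only [abs_le] at this
  exact this.1

lemma Ray_le_inner (A : Matrix (Fin p) (Fin p) ℝ) {V : Submodule ℝ (Vec p)} {x : Vec p}
    (hx : x ∈ V) (h1 : ‖x‖ = 1) : Ray A V ≤ ⟪mApp A x, x⟫ :=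
  ciInf_le (bddBelow_ray A V) ⟨x, hx, h1⟩

lemma le_Ray (A : Matrix (Fin p) (Fin p) ℝ) {V : Submodule ℝ (Vec p)} {r : ℝ}
    (hne : ∃ x, x ∈ V ∧ ‖x‖ = 1)
    (h : ∀ x ∈ V, ‖x‖ = 1 → r ≤ ⟪mApp A x, x⟫) : r ≤ Ray A V := by
  haveI : Nonempty {x : Vec p // x ∈ V ∧ ‖x‖ = 1} := ⟨⟨hne.choose, hne.choose_spec⟩⟩
  exact le_ciInf fun x => h x.1 x.2.1 x.2.2

lemma Ray_le_opNorm (A : Matrix (Fin p) (Fin p) ℝ) {V : Submodule ℝ (Vec p)}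
    (hne : ∃ x, x ∈ V ∧ ‖x‖ = 1) : Ray A V ≤ opNorm A := by
  obtain ⟨x, hxV, hx1⟩ := hne
  refine (Ray_le_inner A hxV hx1).trans ?_
  have := abs_inner_mApp_le A hx1
  simp only [abs_le] at this
  exact this.2

lemma bddAbove_eigk (A : Matrix (Fin p) (Fin p) ℝ) (k : ℕ) (hk : 1 ≤ k) :
    BddAbove (Set.range fun V : {V : Submodule ℝ (Vec p) // Module.finrank ℝ V = k} =>
      Ray A V.1) := by
  refine ⟨opNorm A, ?_⟩
  rintro r ⟨⟨V, hV⟩, rfl⟩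
  exact Ray_le_opNorm A (exists_unit_of_finrank_pos (by rw [hV]; omega))

lemma le_eigk (A : Matrix (Fin p) (Fin p) ℝ) {k : ℕ} (hk : 1 ≤ k) {V : Submodule ℝ (Vec p)}
    (hV : Module.finrank ℝ V = k) {r : ℝ}
    (h : ∀ x ∈ V, ‖x‖ = 1 → r ≤ ⟪mApp A x, x⟫) : r ≤ eigk A k := by
  rw [eigk_eq_iSup_Ray]
  refine le_trans (le_Ray A (exists_unit_of_finrank_pos (by rw [hV]; omega)) h) ?_
  exact le_ciSup (bddAbove_eigk A k hk) (⟨V, hV⟩ : {V : Submodule ℝ (Vec p) //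
    Module.finrank ℝ V = k})

lemma inner_le_eigk_one (A : Matrix (Fin p) (Fin p) ℝ) {x : Vec p} (hx : ‖x‖ = 1) :
    ⟪mApp A x, x⟫ ≤ eigk A 1 := by
  have hx0 : x ≠ 0 := by intro h; rw [h] at hx; simp at hx
  refine le_eigk A le_rfl (finrank_span_singleton hx0) ?_
  rintro y hy h1
  obtain ⟨a, rfl⟩ := Submodule.mem_span_singleton.1 hy
  have ha : a ^ 2 = 1 := by
    have : |a| * ‖x‖ = 1 := by rwa [norm_smul, Real.norm_eq_abs] at h1
    rw [hx, mul_one] at this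
    nlinarith [abs_nonneg a, sq_abs a]
  rw [mApp_lin_smul, real_inner_smul_left, real_inner_smul_right]
  have : a * (a * ⟪mApp A x, x⟫) = a ^ 2 * ⟪mApp A x, x⟫ := by ring
  rw [this, ha, one_mul]

lemma weyl (A B : Matrix (Fin p) (Fin p) ℝ) {k : ℕ} (hk : 1 ≤ k) :
    eigk A k ≤ eigk B k + opNorm (A - B) := by
  by_cases hne : Nonempty {V : Submodule ℝ (Vec p) // Module.finrank ℝ V = k}
  · rw [eigk_eq_iSup_Ray]
    refine ciSup_le fun ⟨V, hV⟩ => ?_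
    have hunit := exists_unit_of_finrank_pos (V := V) (by omega)
    have key : ∀ x ∈ V, ‖x‖ = 1 → Ray A V - opNorm (A - B) ≤ ⟪mApp B x, x⟫ := by
      intro x hxV hx1
      have h1 : Ray A V ≤ ⟪mApp A x, x⟫ := Ray_le_inner A hxV hx1
      have h2 : ⟪mApp A x, x⟫ - ⟪mApp B x, x⟫ ≤ opNorm (A - B) := by
        have := abs_inner_mApp_le (A - B) hx1
        rw [mApp_sub, inner_sub_left] at this
        simp only [abs_le] at this
        exact this.2
      linarith
    have h3 : Ray A V - opNorm (A - B) ≤ Ray B V := le_Ray B hunit key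
    have h4 : Ray B V ≤ eigk B k := by
      rw [eigk_eq_iSup_Ray]
      exact le_ciSup (bddAbove_eigk B k hk) (⟨V, hV⟩ : {V : Submodule ℝ (Vec p) //
        Module.finrank ℝ V = k})
    linarith
  · rw [not_nonempty_iff] at hne
    rw [eigk_eq_iSup_Ray, eigk_eq_iSup_Ray, Real.iSup_of_isEmpty, Real.iSup_of_isEmpty]
    simpa using opNorm_nonneg (A - B)
lemma isHermitian_of_isSymm {A : Matrix (Fin p) (Fin p) ℝ} (h : A.IsSymm) :
    A.IsHermitian := by
  rw [Matrix.IsHermitian, Matrix.conjTranspose_eq_transpose_of_trivial]; exact h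

lemma mApp_eigenvectorBasis {A : Matrix (Fin p) (Fin p) ℝ} (hA : A.IsHermitian) (i : Fin p) :
    mApp A (hA.eigenvectorBasis i) = hA.eigenvalues i • hA.eigenvectorBasis i := by
  have h := hA.mulVec_eigenvectorBasis i
  rw [mApp, Matrix.toEuclideanLin_apply]
  exact congrArg (WithLp.equiv 2 (Fin p → ℝ)).symm h

lemma inner_mApp_le_of_eigen_bound {A : Matrix (Fin p) (Fin p) ℝ} (hA : A.IsHermitian)
    {m : ℝ} (hb : ∀ i, hA.eigenvalues i ≤ m) {x : Vec p} (hx : ‖x‖ = 1) :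
    ⟪mApp A x, x⟫ ≤ m := by
  set u := hA.eigenvectorBasis with hu
  set a : Fin p → ℝ := fun i => ⟪u i, x⟫ with hadef
  have hxsum : ∑ i, a i • u i = x := u.sum_repr' x
  have hmApp : mApp A x = ∑ i, (hA.eigenvalues i * a i) • u i := by
    rw [← hxsum, mApp]
    rw [map_sum]
    refine Finset.sum_congr rfl fun i _ => ?_
    rw [LinearMap.map_smul, ← mApp, mApp_eigenvectorBasis hA i, smul_smul, mul_comm]
  have hon : Orthonormal ℝ u := u.orthonormal
  have h1 : ⟪mApp A x, x⟫ = ∑ i, (hA.eigenvalues i * a i) * a i := by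
    rw [hmApp]
    nth_rewrite 1 [← hxsum]
    simpa using hon.inner_sum (fun i => hA.eigenvalues i * a i) a Finset.univ
  have h2 : (1 : ℝ) = ∑ i, a i * a i := by
    have : ⟪x, x⟫ = ∑ i, a i * a i := by
      rw [← hxsum]
      simpa using hon.inner_sum a a Finset.univ
    rw [← this, real_inner_self_eq_norm_sq, hx]; norm_num
  rw [h1]
  calc ∑ i, (hA.eigenvalues i * a i) * a i ≤ ∑ i, m * (a i * a i) := by
        refine Finset.sum_le_sum fun i _ => ?_
        have hsq : 0 ≤ a i * a i := mul_self_nonneg _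
        nlinarith [hb i]
    _ = m := by rw [← Finset.mul_sum, ← h2, mul_one]

lemma eigenvalue_le_eigk_one {A : Matrix (Fin p) (Fin p) ℝ} (hA : A.IsHermitian) (i : Fin p) :
    hA.eigenvalues i ≤ eigk A 1 := by
  have h1 : ‖hA.eigenvectorBasis i‖ = 1 := hA.eigenvectorBasis.orthonormal.1 i
  have := inner_le_eigk_one A h1
  rwa [mApp_eigenvectorBasis hA i, real_inner_smul_left, real_inner_self_eq_norm_sq, h1,
    one_pow, mul_one] at this

lemma exists_top_eigenvector {A : Matrix (Fin p) (Fin p) ℝ} (hA : A.IsHermitian) (hp : 0 < p) :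
    ∃ w : Vec p, ‖w‖ = 1 ∧ mApp A w = (eigk A 1) • w := by
  haveI : NeZero p := ⟨by omega⟩
  obtain ⟨k₀, hk₀⟩ : ∃ k₀, ∀ k, hA.eigenvalues k ≤ hA.eigenvalues k₀ :=
    Finite.exists_max hA.eigenvalues
  have hle : eigk A 1 ≤ hA.eigenvalues k₀ := by
    rw [eigk_eq_iSup_Ray]
    have u0 : Vec p := hA.eigenvectorBasis 0
    haveI : Nonempty {V : Submodule ℝ (Vec p) // Module.finrank ℝ V = 1} := by
      refine ⟨⟨Submodule.span ℝ {hA.eigenvectorBasis 0}, finrank_span_singleton ?_⟩⟩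
      intro h
      have h1 : ‖hA.eigenvectorBasis 0‖ = 1 := hA.eigenvectorBasis.orthonormal.1 0
      rw [h] at h1; simp at h1
    refine ciSup_le fun ⟨V, hV⟩ => ?_
    obtain ⟨x, hxV, hx1⟩ := exists_unit_of_finrank_pos (V := V) (by rw [hV]; omega)
    exact (Ray_le_inner A hxV hx1).trans (inner_mApp_le_of_eigen_bound hA hk₀ hx1)
  have heq : hA.eigenvalues k₀ = eigk A 1 :=
    le_antisymm (eigenvalue_le_eigk_one hA k₀) hle
  exact ⟨hA.eigenvectorBasis k₀, hA.eigenvectorBasis.orthonormal.1 k₀, by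
    rw [mApp_eigenvectorBasis hA k₀, heq]⟩

lemma inner_mApp_symm {A : Matrix (Fin p) (Fin p) ℝ} (hA : A.IsSymm) (x y : Vec p) :
    ⟪mApp A x, y⟫ = ⟪x, mApp A y⟫ := by
  nth_rewrite 1 [← hA]
  exact inner_transpose A x y

lemma pair_le_eigk_two (A : Matrix (Fin p) (Fin p) ℝ) {v w : Vec p} {c ν : ℝ}
    (hv1 : ‖v‖ = 1) (hw1 : ‖w‖ = 1) (hvw : ⟪v, w⟫ = 0)
    (hAv : mApp A v = c • v) (hAw : mApp A w = ν • w) (hle : ν ≤ c) :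
    ν ≤ eigk A 2 := by
  have hwv : ⟪w, v⟫ = 0 := by rw [real_inner_comm]; exact hvw
  have hvv : ⟪v, v⟫ = 1 := by rw [real_inner_self_eq_norm_sq, hv1]; norm_num
  have hww : ⟪w, w⟫ = 1 := by rw [real_inner_self_eq_norm_sq, hw1]; norm_num
  have hon : Orthonormal ℝ ![v, w] := by
    rw [orthonormal_iff_ite]
    intro i j
    fin_cases i <;> fin_cases j <;>
      simp [hvv, hww, hvw, hwv, hv1, hw1]
  have hrank : Module.finrank ℝ (Submodule.span ℝ (Set.range ![v, w])) = 2 := by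
    rw [finrank_span_eq_card hon.linearIndependent]; simp
  refine le_eigk A (by omega) hrank ?_
  intro x hx hx1
  obtain ⟨f, hf⟩ := (Submodule.mem_span_range_iff_exists_fun ℝ).1 hx
  have hx2 : f 0 • v + f 1 • w = x := by
    rw [← hf]; simp [Fin.sum_univ_two]
  set s := f 0
  set t := f 1
  have hnorm : s * s + t * t = 1 := by
    have : ⟪x, x⟫ = 1 := by rw [real_inner_self_eq_norm_sq, hx1]; norm_num
    rw [← hx2] at this
    simp only [inner_add_left, inner_add_right, real_inner_smul_left, real_inner_smul_right,
      hvv, hww, hvw, hwv] at this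
    nlinarith [this]
  have hval : ⟪mApp A x, x⟫ = s * s * c + t * t * ν := by
    rw [← hx2, mApp_lin_add, mApp_lin_smul, mApp_lin_smul, hAv, hAw]
    simp only [inner_add_left, inner_add_right, real_inner_smul_left, real_inner_smul_right,
      hvv, hww, hvw, hwv]
    ring
  rw [hval]
  have h2 : ν * (s * s + t * t) = ν := by rw [hnorm, mul_one]
  nlinarith [mul_nonneg (sub_nonneg.2 hle) (mul_self_nonneg s), h2]
lemma p_pos_of_gap {S : Matrix (Fin p) (Fin p) ℝ} (hgap : 0 < eigk S 1 - eigk S 2) : 0 < p := by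
  by_contra hp
  have hp0 : p = 0 := by omega
  subst hp0
  have hdim : ∀ (V : Submodule ℝ (Vec 0)), Module.finrank ℝ V = 0 := by
    intro V
    have h1 : Module.finrank ℝ (Vec 0) = 0 := by simp
    have := Submodule.finrank_le V
    omega
  have h1 : eigk S 1 = 0 := by
    haveI : IsEmpty {V : Submodule ℝ (Vec 0) // Module.finrank ℝ V = 1} :=
      ⟨fun ⟨V, hV⟩ => by rw [hdim V] at hV; omega⟩
    rw [eigk_eq_iSup_Ray, Real.iSup_of_isEmpty]
  have h2 : eigk S 2 = 0 := by
    haveI : IsEmpty {V : Submodule ℝ (Vec 0) // Module.finrank ℝ V = 2} :=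
      ⟨fun ⟨V, hV⟩ => by rw [hdim V] at hV; omega⟩
    rw [eigk_eq_iSup_Ray, Real.iSup_of_isEmpty]
  rw [h1, h2] at hgap
  simp at hgap

lemma eigenvalues_M {T : Matrix (Fin p) (Fin p) ℝ} (hT : T.IsSymm) (hp : 0 < p)
    (hM : (eigk T 1 • (1 : Matrix (Fin p) (Fin p) ℝ) - T).IsHermitian) (i : Fin p) :
    0 ≤ hM.eigenvalues i ∧
      (hM.eigenvalues i ≠ 0 → eigk T 1 - eigk T 2 ≤ hM.eigenvalues i) := by
  set c := eigk T 1 with hc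
  set μ := hM.eigenvalues i with hμ
  set u := hM.eigenvectorBasis i with hudef
  have hu1 : ‖u‖ = 1 := hM.eigenvectorBasis.orthonormal.1 i
  have hMu : mApp (c • (1 : Matrix (Fin p) (Fin p) ℝ) - T) u = μ • u := mApp_eigenvectorBasis hM i
  have hTu : mApp T u = (c - μ) • u := by
    rw [mApp_sub, mApp_smul_one] at hMu
    have : mApp T u = c • u - μ • u := by
      rw [← hMu]; abel
    rw [this, ← sub_smul]
  have hμ0 : 0 ≤ μ := by
    have h1 : ⟪mApp T u, u⟫ ≤ c := inner_le_eigk_one T hu1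
    rw [hTu, real_inner_smul_left, real_inner_self_eq_norm_sq, hu1] at h1
    nlinarith
  refine ⟨hμ0, fun hμne => ?_⟩
  have hμpos : 0 < μ := lt_of_le_of_ne hμ0 (Ne.symm hμne)
  obtain ⟨w, hw1, hw⟩ := exists_top_eigenvector (isHermitian_of_isSymm hT) hp
  have horth : ⟪w, u⟫ = 0 := by
    have h1 : ⟪mApp T w, u⟫ = ⟪w, mApp T u⟫ := inner_mApp_symm hT w u
    rw [hw, hTu, real_inner_smul_left, real_inner_smul_right] at h1
    have : μ * ⟪w, u⟫ = 0 := by linarith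
    rcases mul_eq_zero.1 this with h | h
    · exact absurd h hμne
    · exact h
  have hν : c - μ ≤ eigk T 2 :=
    pair_le_eigk_two T hw1 hu1 horth hw hTu (by linarith)
  linarith

lemma sval_ge {M : Matrix (Fin p) (Fin p) ℝ} (hM : M.IsHermitian) {δ : ℝ} (hδ : 0 < δ)
    (hkey : ∀ i, hM.eigenvalues i ≠ 0 → δ ≤ hM.eigenvalues i)
    {j : ℕ} (hj1 : 1 ≤ j) (hjp : j ≤ p) (hne : sval M j ≠ 0) : δ ≤ sval M j := by
  classical
  set e := eigk (Mᵀ * M) j with he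
  have hepos : 0 < e := by
    rcases lt_or_ge 0 e with h | h
    · exact h
    · exfalso; exact hne (by rw [sval, ← he, Real.sqrt_eq_zero'.mpr h])
  -- find V with positive Ray
  have hVex : ∃ V : {V : Submodule ℝ (Vec p) // Module.finrank ℝ V = j},
      0 < Ray (Mᵀ * M) V.1 := by
    by_contra hcon
    push_neg at hcon
    by_cases hne2 : Nonempty {V : Submodule ℝ (Vec p) // Module.finrank ℝ V = j}
    · have : e ≤ 0 := by
        rw [he, eigk_eq_iSup_Ray]
        exact ciSup_le fun V => hcon V
      linarith
    · rw [not_nonempty_iff] at hne2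
      rw [he, eigk_eq_iSup_Ray, Real.iSup_of_isEmpty] at hepos
      linarith
  obtain ⟨⟨V, hV⟩, hRay⟩ := hVex
  set u := hM.eigenvectorBasis with hudef
  have hon : Orthonormal ℝ u := u.orthonormal
  set Z : Finset (Fin p) := Finset.univ.filter (fun i => hM.eigenvalues i = 0) with hZ
  set K : Submodule ℝ (Vec p) :=
    Submodule.span ℝ (Set.range (fun i : {i // i ∈ Z} => u i)) with hK
  have hK0 : ∀ x ∈ K, mApp M x = 0 := by
    intro x hx
    induction hx using Submodule.span_induction with
    | mem y hy =>
        obtain ⟨⟨i, hi⟩, rfl⟩ := hy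
        rw [mApp_eigenvectorBasis hM i]
        have : hM.eigenvalues i = 0 := by
          simpa [hZ] using hi
        rw [this, zero_smul]
    | zero => simp [mApp, map_zero]
    | add y z _ _ hy hz => rw [mApp_lin_add, hy, hz, add_zero]
    | smul a y _ hy => rw [mApp_lin_smul, hy, smul_zero]
  have hdisj : V ⊓ K = ⊥ := by
    rw [Submodule.eq_bot_iff]
    intro x ⟨hxV, hxK⟩
    by_contra hx0
    set x' : Vec p := (‖x‖⁻¹ : ℝ) • x with hx'
    have hx'1 : ‖x'‖ = 1 := by
      rw [hx', norm_smul, norm_inv, norm_norm, inv_mul_cancel₀ (norm_ne_zero_iff.2 hx0)]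
    have hx'V : x' ∈ V := V.smul_mem _ hxV
    have h1 : Ray (Mᵀ * M) V ≤ ⟪mApp (Mᵀ * M) x', x'⟫ := Ray_le_inner _ hx'V hx'1
    rw [inner_mApp_transpose_mul_self] at h1
    have h2 : mApp M x' = 0 := by
      rw [hx', mApp_lin_smul, hK0 x hxK, smul_zero]
    rw [h2] at h1
    simp at h1
    linarith
  have honZ : Orthonormal ℝ (fun i : {i // i ∈ Z} => u i) :=
    hon.comp _ Subtype.val_injective
  have hcardK : Module.finrank ℝ K = Z.card := by
    rw [hK, finrank_span_eq_card honZ.linearIndependent]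
    simp
  have hdimcount : j + Z.card ≤ p := by
    have h1 := Submodule.finrank_sup_add_finrank_inf_eq V K
    rw [hdisj] at h1
    have h2 : Module.finrank ℝ (V ⊔ K : Submodule ℝ (Vec p)) ≤ p := by
      have := Submodule.finrank_le (V ⊔ K : Submodule ℝ (Vec p))
      simpa using this
    simp only [finrank_bot, add_zero] at h1
    omega
  set N : Finset (Fin p) := Finset.univ.filter (fun i => hM.eigenvalues i ≠ 0) with hN
  have hcardN : j ≤ N.card := by
    have : Z.card + N.card = p := by
      rw [hZ, hN]
      rw [← Finset.card_union_of_disjoint]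
      · rw [Finset.filter_union_filter_not_eq]; simp
      · exact Finset.disjoint_filter_filter_not _ _ _
    omega
  obtain ⟨N', hN'sub, hN'card⟩ := Finset.exists_subset_card_eq hcardN
  have honN : Orthonormal ℝ (fun i : {i // i ∈ N'} => u i) :=
    hon.comp _ Subtype.val_injective
  set W : Submodule ℝ (Vec p) :=
    Submodule.span ℝ (Set.range (fun i : {i // i ∈ N'} => u i)) with hW
  have hrankW : Module.finrank ℝ W = j := by
    rw [hW, finrank_span_eq_card honN.linearIndependent]
    simp [hN'card]
  have hbound : δ ^ 2 ≤ eigk (Mᵀ * M) j := by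
    refine le_eigk _ hj1 hrankW ?_
    intro x hx hx1
    rw [inner_mApp_transpose_mul_self]
    obtain ⟨f, hf⟩ := (Submodule.mem_span_range_iff_exists_fun ℝ).1 hx
    have hMx : mApp M x = ∑ i : {i // i ∈ N'}, (hM.eigenvalues i.1 * f i) • u i.1 := by
      rw [← hf, mApp]
      rw [map_sum]
      refine Finset.sum_congr rfl fun i _ => ?_
      rw [LinearMap.map_smul, ← mApp, mApp_eigenvectorBasis hM i.1, smul_smul, mul_comm]
    have hnormMx : ‖mApp M x‖ ^ 2 = ∑ i : {i // i ∈ N'}, (hM.eigenvalues i.1 * f i) ^ 2 := by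
      rw [← real_inner_self_eq_norm_sq, hMx]
      have := honN.inner_sum (fun i => hM.eigenvalues i.1 * f i)
        (fun i => hM.eigenvalues i.1 * f i) Finset.univ
      simpa [sq] using this
    have hnormx : (1 : ℝ) = ∑ i : {i // i ∈ N'}, (f i) ^ 2 := by
      have h0 : ⟪x, x⟫ = ∑ i : {i // i ∈ N'}, f i * f i := by
        rw [← hf]
        simpa using honN.inner_sum f f Finset.univ
      have h1 : ⟪x, x⟫ = 1 := by rw [real_inner_self_eq_norm_sq, hx1]; norm_num
      rw [h1] at h0
      simpa [sq] using h0
    rw [hnormMx]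
    calc δ ^ 2 = ∑ i : {i // i ∈ N'}, δ ^ 2 * (f i) ^ 2 := by
          rw [← Finset.mul_sum, ← hnormx, mul_one]
      _ ≤ ∑ i : {i // i ∈ N'}, (hM.eigenvalues i.1 * f i) ^ 2 := by
          refine Finset.sum_le_sum fun i _ => ?_
          have hiN : hM.eigenvalues i.1 ≠ 0 := by
            have := hN'sub i.2
            simpa [hN] using this
          have hδi : δ ≤ hM.eigenvalues i.1 := hkey i.1 hiN
          have : (hM.eigenvalues i.1 * f i) ^ 2 = (hM.eigenvalues i.1) ^ 2 * (f i) ^ 2 := by ring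
          rw [this]
          have : δ ^ 2 ≤ (hM.eigenvalues i.1) ^ 2 := by nlinarith
          nlinarith [sq_nonneg (f i)]
  have : δ = Real.sqrt (δ ^ 2) := by rw [Real.sqrt_sq hδ.le]
  rw [this, sval]
  exact Real.sqrt_le_sqrt hbound
lemma transpose_eq_star (A : Matrix (Fin p) (Fin p) ℝ) : Aᵀ = star A := by
  rw [Matrix.star_eq_conjTranspose, Matrix.conjTranspose_eq_transpose_of_trivial]

lemma penrose_unique {M B C : Matrix (Fin p) (Fin p) ℝ}
    (hB1 : M * B * M = M) (hB2 : B * M * B = B) (hB3 : (M * B)ᵀ = M * B)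
    (hB4 : (B * M)ᵀ = B * M)
    (hC1 : M * C * M = M) (hC2 : C * M * C = C) (hC3 : (M * C)ᵀ = M * C)
    (hC4 : (C * M)ᵀ = C * M) : B = C := by
  have hMB : M * B = M * C := by
    calc M * B = (M * B)ᵀ := hB3.symm
      _ = Bᵀ * Mᵀ := Matrix.transpose_mul _ _
      _ = Bᵀ * (M * C * M)ᵀ := by rw [hC1]
      _ = Bᵀ * (Mᵀ * (M * C)ᵀ) := by rw [Matrix.transpose_mul (M * C) M]
      _ = (Bᵀ * Mᵀ) * (M * C)ᵀ := by rw [Matrix.mul_assoc]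
      _ = (M * B)ᵀ * (M * C) := by rw [Matrix.transpose_mul M B, hC3]
      _ = (M * B) * (M * C) := by rw [hB3]
      _ = (M * B * M) * C := by rw [Matrix.mul_assoc (M * B) M C]
      _ = M * C := by rw [hB1]
  have hBM : B * M = C * M := by
    calc B * M = (B * M)ᵀ := hB4.symm
      _ = Mᵀ * Bᵀ := Matrix.transpose_mul _ _
      _ = (M * (C * M))ᵀ * Bᵀ := by rw [← Matrix.mul_assoc, hC1]
      _ = ((C * M)ᵀ * Mᵀ) * Bᵀ := by rw [Matrix.transpose_mul M (C * M)]
      _ = ((C * M) * Mᵀ) * Bᵀ := by rw [hC4]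
      _ = (C * M) * (Mᵀ * Bᵀ) := by rw [Matrix.mul_assoc]
      _ = (C * M) * (B * M)ᵀ := by rw [Matrix.transpose_mul B M]
      _ = (C * M) * (B * M) := by rw [hB4]
      _ = C * (M * B * M) := by rw [Matrix.mul_assoc C M (B * M), ← Matrix.mul_assoc M B M]
      _ = C * M := by rw [hB1]
  calc B = B * M * B := hB2.symm
    _ = (C * M) * B := by rw [hBM]
    _ = C * (M * B) := by rw [Matrix.mul_assoc]
    _ = C * (M * C) := by rw [hMB]
    _ = C * M * C := by rw [Matrix.mul_assoc]
    _ = C := hC2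

lemma clm_unitary_norm {W : Matrix (Fin p) (Fin p) ℝ} (hW : star W * W = 1) (x : Vec p) :
    ‖(Matrix.toEuclideanCLM (𝕜 := ℝ) W : Vec p →L[ℝ] Vec p) x‖ = ‖x‖ := by
  set f := (Matrix.toEuclideanCLM (𝕜 := ℝ) W : Vec p →L[ℝ] Vec p) with hf
  have h1 : (Matrix.toEuclideanCLM (𝕜 := ℝ) (star W) : Vec p →L[ℝ] Vec p) (f x) = x := by
    have h := congrArg (Matrix.toEuclideanCLM (𝕜 := ℝ)) hW
    rw [_root_.map_mul, _root_.map_one] at h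
    calc (Matrix.toEuclideanCLM (𝕜 := ℝ) (star W)) (f x)
        = ((Matrix.toEuclideanCLM (𝕜 := ℝ) (star W)) * f) x := rfl
      _ = (1 : Vec p →L[ℝ] Vec p) x := by rw [hf, h]
      _ = x := rfl
  have h2 : ⟪f x, f x⟫ = ⟪x, x⟫ := by
    calc ⟪f x, f x⟫ = ⟪ContinuousLinearMap.adjoint f (f x), x⟫ :=
          (ContinuousLinearMap.adjoint_inner_left _ _ _).symm
      _ = ⟪x, x⟫ := by
          rw [← ContinuousLinearMap.star_eq_adjoint, hf, ← map_star, h1]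
  have h3 : ‖f x‖ ^ 2 = ‖x‖ ^ 2 := by
    rw [← real_inner_self_eq_norm_sq, ← real_inner_self_eq_norm_sq, h2]
  rw [← Real.sqrt_sq (norm_nonneg (f x)), ← Real.sqrt_sq (norm_nonneg x), h3]

lemma opNorm_unitary_le {W : Matrix (Fin p) (Fin p) ℝ} (hW : star W * W = 1) :
    opNorm W ≤ 1 := by
  refine ContinuousLinearMap.opNorm_le_bound _ zero_le_one fun x => ?_
  rw [clm_unitary_norm hW x, one_mul]

lemma opNorm_diagonal_le {a : Fin p → ℝ} {c : ℝ} (hc : 0 ≤ c) (h : ∀ i, |a i| ≤ c) :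
    opNorm (diagonal a) ≤ c := by
  refine ContinuousLinearMap.opNorm_le_bound _ hc fun x => ?_
  set y := (Matrix.toEuclideanCLM (𝕜 := ℝ) (diagonal a) : Vec p →L[ℝ] Vec p) x with hy
  have hcoord : ∀ i, y i = a i * x i := by
    intro i
    show ((diagonal a) *ᵥ (WithLp.equiv 2 _ x)) i = a i * x i
    rw [Matrix.mulVec_diagonal]
    rfl
  have hy2 : ‖y‖ ^ 2 = ∑ i, (a i * x i) ^ 2 := by
    rw [PiLp.norm_sq_eq_of_L2]
    refine Finset.sum_congr rfl fun i _ => ?_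
    rw [hcoord i, Real.norm_eq_abs, sq_abs]
  have hx2 : ‖x‖ ^ 2 = ∑ i, (x i) ^ 2 := by
    rw [PiLp.norm_sq_eq_of_L2]
    refine Finset.sum_congr rfl fun i _ => ?_
    rw [Real.norm_eq_abs, sq_abs]
  have h1 : ‖y‖ ^ 2 ≤ c ^ 2 * ‖x‖ ^ 2 := by
    rw [hy2, hx2, Finset.mul_sum]
    refine Finset.sum_le_sum fun i _ => ?_
    have hi := h i
    have h2 : (a i) ^ 2 ≤ c ^ 2 := by nlinarith [abs_nonneg (a i), sq_abs (a i)]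
    have h3 : (a i * x i) ^ 2 = (a i) ^ 2 * (x i) ^ 2 := by ring
    rw [h3]
    nlinarith [sq_nonneg (x i)]
  nlinarith [norm_nonneg y, mul_nonneg hc (norm_nonneg x)]

lemma opNorm_mul_le (A B : Matrix (Fin p) (Fin p) ℝ) :
    opNorm (A * B) ≤ opNorm A * opNorm B := by
  show ‖Matrix.toEuclideanCLM (𝕜 := ℝ) (A * B)‖ ≤ _
  rw [_root_.map_mul]
  exact norm_mul_le _ _
lemma pinv_opNorm_le {M : Matrix (Fin p) (Fin p) ℝ} (hM : M.IsHermitian) {δ : ℝ} (hδ : 0 < δ)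
    (hkey : ∀ i, hM.eigenvalues i ≠ 0 → δ ≤ hM.eigenvalues i) :
    opNorm (pinv M) ≤ δ⁻¹ := by
  classical
  set U : Matrix (Fin p) (Fin p) ℝ := ↑(hM.eigenvectorUnitary) with hUdef
  set d : Fin p → ℝ := hM.eigenvalues with hd
  set g : Fin p → ℝ := fun i => (d i)⁻¹ with hg
  have hspec : M = U * diagonal d * star U := by
    have h := hM.spectral_theorem
    simpa [hUdef, hd] using h
  have hUU : star U * U = 1 := by
    have := Unitary.coe_star_mul_self hM.eigenvectorUnitary
    simpa [hUdef] using this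
  have hUU' : U * star U = 1 := by
    have := Unitary.coe_mul_star_self hM.eigenvectorUnitary
    simpa [hUdef] using this
  have key : ∀ a b : Fin p → ℝ, (U * diagonal a * star U) * (U * diagonal b * star U)
      = U * diagonal (fun i => a i * b i) * star U := by
    intro a b
    calc (U * diagonal a * star U) * (U * diagonal b * star U)
        = U * diagonal a * (star U * U) * (diagonal b * star U) := by noncomm_ring
      _ = U * diagonal a * (diagonal b * star U) := by rw [hUU, Matrix.mul_one]
      _ = U * (diagonal a * diagonal b) * star U := by noncomm_ring
      _ = U * diagonal (fun i => a i * b i) * star U := by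
          rw [Matrix.diagonal_mul_diagonal]
  have hsd : ∀ a : Fin p → ℝ, star (diagonal a) = diagonal a := by
    intro a
    rw [Matrix.star_eq_conjTranspose, Matrix.diagonal_conjTranspose]
    congr 1
  have keyT : ∀ a : Fin p → ℝ, (U * diagonal a * star U)ᵀ = U * diagonal a * star U := by
    intro a
    have h : star (U * diagonal a * star U) = U * diagonal a * star U := by
      rw [Matrix.star_mul, Matrix.star_mul, star_star, hsd]
      noncomm_ring
    rw [transpose_eq_star, h]
  set B : Matrix (Fin p) (Fin p) ℝ := U * diagonal g * star U with hB
  have hdgd : (fun i => d i * g i * d i) = d := by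
    funext i
    by_cases h : d i = 0
    · simp [hg, h]
    · simp only [hg]; field_simp
  have hgdg : (fun i => g i * d i * g i) = g := by
    funext i
    by_cases h : d i = 0
    · simp [hg, h]
    · simp only [hg]; field_simp
  have hc1 : M * B * M = M := by
    rw [hspec, hB]
    simp only [key]
    rw [hdgd]
  have hc2 : B * M * B = B := by
    rw [hspec, hB]
    simp only [key]
    rw [hgdg]
  have hc3 : (M * B)ᵀ = M * B := by
    rw [hspec, hB]
    simp only [key]
    exact keyT _
  have hc4 : (B * M)ᵀ = B * M := by
    rw [hspec, hB]
    simp only [key]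
    exact keyT _
  have hex : ∃ B', M * B' * M = M ∧ B' * M * B' = B' ∧ (M * B')ᵀ = M * B' ∧
      (B' * M)ᵀ = B' * M := ⟨B, hc1, hc2, hc3, hc4⟩
  have hpinv : pinv M = B := by
    obtain ⟨h1, h2, h3, h4⟩ := hex.choose_spec
    have : pinv M = hex.choose := by
      unfold pinv
      rw [dif_pos hex]
    rw [this]
    exact penrose_unique h1 h2 h3 h4 hc1 hc2 hc3 hc4
  rw [hpinv, hB]
  have hdg : opNorm (diagonal g) ≤ δ⁻¹ := by
    refine opNorm_diagonal_le (by positivity) fun i => ?_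
    by_cases h : d i = 0
    · simp [hg, h]
      positivity
    · have h1 : δ ≤ d i := hkey i h
      have h2 : 0 < d i := lt_of_lt_of_le hδ h1
      rw [hg, abs_of_pos (by positivity)]
      exact inv_anti₀ hδ h1
  have hU1 : opNorm U ≤ 1 := opNorm_unitary_le hUU
  have hU2 : opNorm (star U) ≤ 1 := by
    refine opNorm_unitary_le ?_
    rw [star_star]
    exact hUU'
  calc opNorm (U * diagonal g * star U)
      ≤ opNorm (U * diagonal g) * opNorm (star U) := opNorm_mul_le _ _
    _ ≤ opNorm (U * diagonal g) * 1 := by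
        refine mul_le_mul_of_nonneg_left hU2 (opNorm_nonneg _)
    _ = opNorm (U * diagonal g) := mul_one _
    _ ≤ opNorm U * opNorm (diagonal g) := opNorm_mul_le _ _
    _ ≤ 1 * δ⁻¹ := by
        refine mul_le_mul hU1 hdg (opNorm_nonneg _) zero_le_one
    _ = δ⁻¹ := one_mul _
end LemC6

/-- proved in Lemma C.6. Let `S, T` be `p×p` real symmetric matrices with
`ω = λ₁(S) − λ₂(S) > 0` and `‖T − S‖_op < ω/2`. Then every nonzero singular value of
`λ₁(T)·I − T` is at least `ω − 2‖T − S‖_op`, and consequently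
`‖(λ₁(T)·I − T)⁺‖_op ≤ (ω − 2‖T − S‖_op)⁻¹`. -/
theorem pinv_opNorm_bound
    {p : ℕ} (S T : Matrix (Fin p) (Fin p) ℝ) (hS : S.IsSymm) (hT : T.IsSymm)
    (hgap : 0 < eigk S 1 - eigk S 2)
    (hclose : opNorm (T - S) < (eigk S 1 - eigk S 2) / 2) :
    (∀ j : ℕ, 1 ≤ j → j ≤ p →
        sval (eigk T 1 • (1 : Matrix (Fin p) (Fin p) ℝ) - T) j ≠ 0 →
        eigk S 1 - eigk S 2 - 2 * opNorm (T - S)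
          ≤ sval (eigk T 1 • (1 : Matrix (Fin p) (Fin p) ℝ) - T) j) ∧
      opNorm (pinv (eigk T 1 • (1 : Matrix (Fin p) (Fin p) ℝ) - T))
        ≤ (eigk S 1 - eigk S 2 - 2 * opNorm (T - S))⁻¹ := by
  have hp : 0 < p := LemC6.p_pos_of_gap hgap
  set M : Matrix (Fin p) (Fin p) ℝ := eigk T 1 • (1 : Matrix (Fin p) (Fin p) ℝ) - T with hMdef
  have hMsymm : M.IsSymm := by
    rw [Matrix.IsSymm, hMdef, Matrix.transpose_sub, Matrix.transpose_smul, Matrix.transpose_one,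
      hT]
  have hM : M.IsHermitian := LemC6.isHermitian_of_isSymm hMsymm
  have hε : 0 ≤ opNorm (T - S) := LemC6.opNorm_nonneg (T - S)
  set ε := opNorm (T - S) with hεdef
  have hopST : opNorm (S - T) = ε := by
    rw [← neg_sub, LemC6.opNorm_neg]
  have hw1 : eigk S 1 ≤ eigk T 1 + ε := by
    have := LemC6.weyl S T (k := 1) le_rfl
    rwa [hopST] at this
  have hw2 : eigk T 2 ≤ eigk S 2 + ε := LemC6.weyl T S (k := 2) (by omega)
  set δ := eigk S 1 - eigk S 2 - 2 * ε with hδdef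
  have hδpos : 0 < δ := by
    rw [hδdef]; linarith [hclose]
  have hgapT : δ ≤ eigk T 1 - eigk T 2 := by
    rw [hδdef]; linarith
  have hkey : ∀ i, hM.eigenvalues i ≠ 0 → δ ≤ hM.eigenvalues i := fun i hne =>
    le_trans hgapT ((LemC6.eigenvalues_M hT hp hM i).2 hne)
  constructor
  · intro j hj1 hjp hne
    exact LemC6.sval_ge hM hδpos hkey hj1 hjp hne
  · exact LemC6.pinv_opNorm_le hM hδpos hkey

end
end
end

section
/- (eigenvector interpolation bound, derived in Lemma C.6 via Davis–Kahan) Let Σ and Σ' be p×p real symmetric matrices with ω = λ₁(Σ) − λ₂(Σ) > 0. For t ∈ [0,1] let Σ_t = (1−t)Σ' + tΣ, and let v(t) be a unit eigenvector of Σ_t associated with its largest eigenvalue λ₁(Σ_t), with signs chosen so that v(t)^⊤ v(1) ≥ 0 for all t. Then for every t ∈ [0,1], ‖v(t) − v(0)‖ ≤ 2^{5/2} ω^{-1} ‖Σ' − Σ‖_op. -/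
open MeasureTheory Filter Matrix
open scoped RealInnerProductSpace ENNReal NNReal

noncomputable section
noncomputable section

set_option synthInstance.maxHeartbeats 1000000
set_option maxHeartbeats 2000000

namespace DKaux

variable {p : ℕ}

lemma mApp_sub (A B : Matrix (Fin p) (Fin p) ℝ) (x : Vec p) :
    mApp (A - B) x = mApp A x - mApp B x := by
  simp [mApp, map_sub]

lemma mApp_addv (A : Matrix (Fin p) (Fin p) ℝ) (x y : Vec p) :
    mApp A (x + y) = mApp A x + mApp A y := by
  simp [mApp, map_add]

lemma mApp_smulv (c : ℝ) (A : Matrix (Fin p) (Fin p) ℝ) (x : Vec p) :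
    mApp A (c • x) = c • mApp A x := by
  simp [mApp, _root_.map_smul]

lemma mApp_symm {A : Matrix (Fin p) (Fin p) ℝ} (hA : A.IsSymm) (x y : Vec p) :
    ⟪mApp A x, y⟫ = ⟪x, mApp A y⟫ := by
  have h : A.IsHermitian := hA
  exact (Matrix.isHermitian_iff_isSymmetric.1 h) x y

lemma abs_inner_mApp_le (A : Matrix (Fin p) (Fin p) ℝ) {x y : Vec p}
    (hx : ‖x‖ = 1) (hy : ‖y‖ = 1) : |⟪mApp A x, y⟫| ≤ opNorm A := by
  have h : mApp A x = Matrix.toEuclideanCLM (𝕜 := ℝ) A x := by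
    rw [mApp, ← Matrix.coe_toEuclideanCLM_eq_toEuclideanLin]; rfl
  rw [h]
  calc |⟪Matrix.toEuclideanCLM (𝕜 := ℝ) A x, y⟫| ≤ ‖Matrix.toEuclideanCLM (𝕜 := ℝ) A x‖ * ‖y‖ :=
        abs_real_inner_le_norm _ _
    _ ≤ opNorm A := by
        rw [hy, mul_one]
        simpa [hx, opNorm] using (Matrix.toEuclideanCLM (𝕜 := ℝ) A).le_opNorm x

lemma opNorm_smul (c : ℝ) (A : Matrix (Fin p) (Fin p) ℝ) :
    opNorm (c • A) = |c| * opNorm A := by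
  rw [opNorm, opNorm, _root_.map_smul]
  rw [norm_smul c (Matrix.toEuclideanCLM (𝕜 := ℝ) A :
      EuclideanSpace ℝ (Fin p) →L[ℝ] EuclideanSpace ℝ (Fin p)), Real.norm_eq_abs]

lemma exists_unit_mem (V : Submodule ℝ (Vec p)) (hV : 0 < Module.finrank ℝ V) :
    ∃ x : Vec p, x ∈ V ∧ ‖x‖ = 1 := by
  have hne : V ≠ ⊥ := by intro h; rw [h] at hV; simp at hV
  obtain ⟨x, hxV, hx0'⟩ := Submodule.exists_mem_ne_zero_of_ne_bot hne
  refine ⟨‖x‖⁻¹ • x, V.smul_mem _ hxV, ?_⟩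
  rw [norm_smul, norm_inv, norm_norm, inv_mul_cancel₀ (norm_ne_zero_iff.2 hx0')]

lemma le_eigk (A : Matrix (Fin p) (Fin p) ℝ) {k : ℕ} (hk : 0 < k) (V : Submodule ℝ (Vec p))
    (hV : Module.finrank ℝ V = k) {c : ℝ}
    (hc : ∀ x : Vec p, x ∈ V → ‖x‖ = 1 → c ≤ ⟪mApp A x, x⟫) : c ≤ eigk A k := by
  have hbdd : BddAbove (Set.range fun (W : {V : Submodule ℝ (Vec p) // Module.finrank ℝ V = k}) =>
      ⨅ x : {x : Vec p // x ∈ W.1 ∧ ‖x‖ = 1}, ⟪mApp A x.1, x.1⟫) := by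
    refine ⟨opNorm A, ?_⟩
    rintro r ⟨W, rfl⟩
    obtain ⟨y, hyW, hy1⟩ := exists_unit_mem W.1 (by rw [W.2]; exact hk)
    have hbb : BddBelow (Set.range fun (x : {x : Vec p // x ∈ W.1 ∧ ‖x‖ = 1}) =>
        ⟪mApp A x.1, x.1⟫) := by
      refine ⟨-opNorm A, ?_⟩
      rintro r ⟨x, rfl⟩
      exact neg_le_of_abs_le (abs_inner_mApp_le A x.2.2 x.2.2)
    calc (⨅ x : {x : Vec p // x ∈ W.1 ∧ ‖x‖ = 1}, ⟪mApp A x.1, x.1⟫) ≤ ⟪mApp A y, y⟫ :=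
          ciInf_le hbb ⟨y, hyW, hy1⟩
      _ ≤ opNorm A := le_of_abs_le (abs_inner_mApp_le A hy1 hy1)
  have hne : Nonempty {x : Vec p // x ∈ V ∧ ‖x‖ = 1} := by
    obtain ⟨y, h1, h2⟩ := exists_unit_mem V (by rw [hV]; exact hk); exact ⟨⟨y, h1, h2⟩⟩
  refine le_trans ?_ (le_ciSup hbdd ⟨V, hV⟩)
  exact le_ciInf fun x => hc x.1 x.2.1 x.2.2

lemma rayleigh_le_eigk1 (A : Matrix (Fin p) (Fin p) ℝ) {x : Vec p} (hx : ‖x‖ = 1) :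
    ⟪mApp A x, x⟫ ≤ eigk A 1 := by
  have hx0 : x ≠ 0 := by intro h; rw [h, norm_zero] at hx; norm_num at hx
  refine le_eigk A one_pos (ℝ ∙ x) (finrank_span_singleton hx0) ?_
  intro y hy hy1
  obtain ⟨a, rfl⟩ := Submodule.mem_span_singleton.1 hy
  have ha : a ^ 2 = 1 := by
    have : |a| = 1 := by rwa [norm_smul, Real.norm_eq_abs, hx, mul_one] at hy1
    nlinarith [abs_nonneg a, sq_abs a]
  rw [mApp_smulv, real_inner_smul_left, real_inner_smul_right, ← mul_assoc, ← sq, ha, one_mul]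

lemma finrank_span_pair {v u : Vec p} (hv : ‖v‖ = 1) (hu : ‖u‖ = 1) (horth : ⟪v, u⟫ = 0) :
    Module.finrank ℝ (Submodule.span ℝ ({v, u} : Set (Vec p))) = 2 := by
  have h1 : ⟪v, v⟫ = 1 := by rw [real_inner_self_eq_norm_mul_norm, hv]; norm_num
  have h2 : ⟪u, u⟫ = 1 := by rw [real_inner_self_eq_norm_mul_norm, hu]; norm_num
  have h3 : ⟪u, v⟫ = 0 := by rw [real_inner_comm]; exact horth
  have hon : Orthonormal ℝ (![v, u]) := by
    rw [orthonormal_iff_ite]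
    intro i j
    fin_cases i <;> fin_cases j <;>
      simp [h1, h2, h3, horth, hv, hu, -PiLp.inner_apply]
  have hli := hon.linearIndependent
  have h := finrank_span_eq_card hli
  rw [show Set.range ![v, u] = {v, u} by
    rw [Matrix.range_cons, Matrix.range_cons, Matrix.range_empty,
      Set.union_empty, Set.singleton_union]] at h
  simpa using h

lemma rayleigh_orth_le_eigk2 {A : Matrix (Fin p) (Fin p) ℝ} (hA : A.IsSymm)
    {v u : Vec p} (hv : ‖v‖ = 1) (hu : ‖u‖ = 1) (horth : ⟪v, u⟫ = 0)
    {μ : ℝ} (heg : mApp A v = μ • v) (hqμ : ⟪mApp A u, u⟫ ≤ μ) :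
    ⟪mApp A u, u⟫ ≤ eigk A 2 := by
  have h1 : ⟪v, v⟫ = 1 := by rw [real_inner_self_eq_norm_mul_norm, hv]; norm_num
  have h2 : ⟪u, u⟫ = 1 := by rw [real_inner_self_eq_norm_mul_norm, hu]; norm_num
  have h3 : ⟪u, v⟫ = 0 := by rw [real_inner_comm]; exact horth
  have hAuv : ⟪mApp A u, v⟫ = 0 := by
    rw [mApp_symm hA, heg, real_inner_smul_right, h3, mul_zero]
  refine le_eigk A two_pos (Submodule.span ℝ {v, u}) (finrank_span_pair hv hu horth) ?_
  intro x hx hx1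
  obtain ⟨a, b, rfl⟩ := Submodule.mem_span_pair.1 hx
  have hAx : mApp A (a • v + b • u) = a • (μ • v) + b • mApp A u := by
    rw [mApp_addv, mApp_smulv, mApp_smulv, heg]
  have hexp : ⟪mApp A (a • v + b • u), a • v + b • u⟫ = a ^ 2 * μ + b ^ 2 * ⟪mApp A u, u⟫ := by
    rw [hAx]
    simp only [inner_add_left, inner_add_right, real_inner_smul_left, real_inner_smul_right,
      h1, h3, horth, hAuv]
    ring
  have hab : a ^ 2 + b ^ 2 = 1 := by
    have h4 : ⟪a • v + b • u, a • v + b • u⟫ = (1:ℝ) := by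
      rw [real_inner_self_eq_norm_mul_norm, hx1]; norm_num
    simp only [inner_add_left, inner_add_right, real_inner_smul_left, real_inner_smul_right,
      h1, h2, h3, horth] at h4
    nlinarith [h4]
  rw [hexp]
  have hq : ⟪mApp A u, u⟫ = (a ^ 2 + b ^ 2) * ⟪mApp A u, u⟫ := by rw [hab, one_mul]
  calc ⟪mApp A u, u⟫ = (a ^ 2 + b ^ 2) * ⟪mApp A u, u⟫ := hq
    _ = a ^ 2 * ⟪mApp A u, u⟫ + b ^ 2 * ⟪mApp A u, u⟫ := by ring
    _ ≤ a ^ 2 * μ + b ^ 2 * ⟪mApp A u, u⟫ := by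
        nlinarith [mul_nonneg (sq_nonneg a) (sub_nonneg.2 hqμ)]

/-- Davis–Kahan (top eigenvector, special case). -/
lemma davis_kahan {A B : Matrix (Fin p) (Fin p) ℝ} (hA : A.IsSymm) (hB : B.IsSymm)
    {v w : Vec p} (hv : ‖v‖ = 1) (hw : ‖w‖ = 1)
    (hev : mApp A v = eigk A 1 • v) (hew : mApp B w = eigk B 1 • w)
    (hsign : 0 ≤ ⟪w, v⟫) (hgap : 0 < eigk A 1 - eigk A 2) :
    ‖w - v‖ ≤ 2 * Real.sqrt 2 * opNorm (B - A) / (eigk A 1 - eigk A 2) := by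
  set ω := eigk A 1 - eigk A 2 with hωdef
  set ε := opNorm (B - A) with hεdef
  have hε : 0 ≤ ε := norm_nonneg _
  have hsqrt2 : Real.sqrt 2 ^ 2 = 2 := Real.sq_sqrt (by norm_num)
  have hsqrt2' : (0:ℝ) < Real.sqrt 2 := Real.sqrt_pos.2 (by norm_num)
  have hc1 : ⟪w, v⟫ ≤ 1 := by
    have := real_inner_le_norm w v
    rwa [hv, hw, one_mul] at this
  have hnorm2 : ‖w - v‖ ^ 2 = 2 - 2 * ⟪w, v⟫ := by
    rw [norm_sub_sq_real, hv, hw]; ring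
  by_cases hcase : ε < ω / 2
  · by_cases hz0 : w - ⟪w, v⟫ • v = 0
    · have hwv : w = ⟪w, v⟫ • v := by rwa [sub_eq_zero] at hz0
      have habs : |⟪w, v⟫| = 1 := by
        have := hw
        rw [hwv, norm_smul, Real.norm_eq_abs, hv, mul_one] at this
        exact this
      have hc : ⟪w, v⟫ = 1 := by
        rcases abs_eq (by norm_num : (0:ℝ) ≤ 1) |>.1 habs with h | h
        · exact h
        · linarith
      have : ‖w - v‖ = 0 := by
        rw [hwv, hc, one_smul, sub_self, norm_zero]
      rw [this]
      positivity
    · set c := ⟪w, v⟫ with hcdef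
      set z := w - c • v with hzdef
      have hvz : ⟪v, z⟫ = 0 := by
        have hvw : ⟪v, w⟫ = c := by rw [hcdef]; exact (real_inner_comm v w).symm
        rw [hzdef, inner_sub_right, real_inner_smul_right, real_inner_self_eq_norm_mul_norm, hv,
          hvw]
        ring
      have hz2 : ‖z‖ ^ 2 = 1 - c ^ 2 := by
        rw [hzdef, norm_sub_sq_real, hw, real_inner_smul_right, ← hcdef, norm_smul,
          Real.norm_eq_abs]
        rw [hv]
        ring_nf
        rw [sq_abs]
        ring
      have hs0 : 0 < ‖z‖ := norm_pos_iff.2 hz0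
      set s := ‖z‖ with hsdef
      set u := s⁻¹ • z with hudef
      have hu1 : ‖u‖ = 1 := by
        rw [hudef, norm_smul, norm_inv, norm_norm, inv_mul_cancel₀ (ne_of_gt hs0)]
      have hvu : ⟪v, u⟫ = 0 := by
        rw [hudef, real_inner_smul_right, hvz, mul_zero]
      have hzu : z = s • u := by
        rw [hudef, smul_smul, mul_inv_cancel₀ (ne_of_gt hs0), one_smul]
      set q := ⟪mApp A u, u⟫ with hqdef
      have hq1 : q ≤ eigk A 1 := rayleigh_le_eigk1 A hu1
      have hq2 : q ≤ eigk A 2 := rayleigh_orth_le_eigk2 hA hv hu1 hvu hev hq1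
      have hwdec : w = c • v + z := by rw [hzdef]; abel
      have hwu : ⟪w, u⟫ = s := by
        rw [hwdec, inner_add_left, real_inner_smul_left, hvu, hzu, real_inner_smul_left,
          real_inner_self_eq_norm_mul_norm, hu1]
        ring
      have hBwu : ⟪mApp B w, u⟫ = eigk B 1 * s := by
        rw [hew, real_inner_smul_left, hwu]
      have hAwu : ⟪mApp A w, u⟫ = s * q := by
        rw [mApp_symm hA, hwdec, inner_add_left, real_inner_smul_left]
        have hvAu : ⟪v, mApp A u⟫ = 0 := by
          rw [← mApp_symm hA, hev, real_inner_smul_left, hvu, mul_zero]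
        rw [hvAu, mul_zero, zero_add, hzu, real_inner_smul_left, ← mApp_symm hA, ← hqdef]
      have key : s * (eigk B 1 - q) = ⟪mApp (B - A) w, u⟫ := by
        rw [mApp_sub, inner_sub_left, hBwu, hAwu]; ring
      have hEbound : ⟪mApp (B - A) w, u⟫ ≤ ε := le_of_abs_le (abs_inner_mApp_le _ hw hu1)
      have hB1 : eigk A 1 - ε ≤ eigk B 1 := by
        have h5 : ⟪mApp B v, v⟫ ≤ eigk B 1 := rayleigh_le_eigk1 B hv
        have h6 : mApp B v = mApp A v + mApp (B - A) v := by
          rw [mApp_sub]; abel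
        have h7 : ⟪mApp A v, v⟫ = eigk A 1 := by
          rw [hev, real_inner_smul_left, real_inner_self_eq_norm_mul_norm, hv]; ring
        have h8 : -ε ≤ ⟪mApp (B - A) v, v⟫ :=
          neg_le_of_abs_le (abs_inner_mApp_le _ hv hv)
        rw [h6, inner_add_left, h7] at h5
        linarith
      have hsω : s * (ω - ε) ≤ ε := by
        have h9 : ω - ε ≤ eigk B 1 - q := by
          have := hB1; have := hq2; rw [hωdef]; linarith
        calc s * (ω - ε) ≤ s * (eigk B 1 - q) := by
              apply mul_le_mul_of_nonneg_left h9 (le_of_lt hs0)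
          _ = ⟪mApp (B - A) w, u⟫ := key
          _ ≤ ε := hEbound
      have hω2 : 0 < ω := hgap
      have hs_le : s ≤ 2 * ε / ω := by
        rw [le_div_iff₀ hω2]
        nlinarith [mul_lt_mul_of_pos_left hcase hs0]
      have hfin : ‖w - v‖ ^ 2 ≤ 2 * s ^ 2 := by
        rw [hnorm2, hz2]
        nlinarith [hsign, hc1]
      have hrhs : ‖w - v‖ ^ 2 ≤ (2 * Real.sqrt 2 * ε / ω) ^ 2 := by
        have h10 : s ^ 2 ≤ (2 * ε / ω) ^ 2 := by
          nlinarith [hs0, hs_le, hε, hω2]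
        have h11 : (2 * Real.sqrt 2 * ε / ω) ^ 2 = 2 * (2 * ε / ω) ^ 2 := by
          field_simp
          nlinarith [hsqrt2]
        rw [h11]
        linarith
      nlinarith [norm_nonneg (w - v), hrhs,
        div_nonneg (mul_nonneg (mul_nonneg (by norm_num : (0:ℝ) ≤ 2) hsqrt2'.le) hε) hω2.le]
  · push_neg at hcase
    have h2 : ‖w - v‖ ^ 2 ≤ 2 := by rw [hnorm2]; linarith
    have hle : ‖w - v‖ ≤ Real.sqrt 2 := by
      nlinarith [norm_nonneg (w - v), hsqrt2', hsqrt2]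
    have hω2 : 0 < ω := hgap
    have : Real.sqrt 2 ≤ 2 * Real.sqrt 2 * ε / ω := by
      rw [le_div_iff₀ hω2]
      nlinarith [hsqrt2']
    linarith

end DKaux

/-- eigenvector interpolation bound, derived in Lemma C.6 via Davis–Kahan.
Let `S, S'` be `p×p` real symmetric matrices with `ω = λ₁(S) − λ₂(S) > 0`. For `t ∈ [0,1]` let
`Σ_t = (1−t)S' + tS` and let `v t` be a unit eigenvector of `Σ_t` for its largest eigenvalue,
with signs chosen so that `⟪v t, v 1⟫ ≥ 0` for all `t`. Then for every `t ∈ [0,1]`,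
`‖v t − v 0‖ ≤ 2^{5/2} ω⁻¹ ‖S' − S‖_op`. -/
theorem eigenvector_interpolation_bound
    {p : ℕ} (S S' : Matrix (Fin p) (Fin p) ℝ) (hS : S.IsSymm) (hS' : S'.IsSymm)
    (hgap : 0 < eigk S 1 - eigk S 2)
    (v : ℝ → Vec p)
    (hunit : ∀ t ∈ Set.Icc (0:ℝ) 1, ‖v t‖ = 1)
    (heig : ∀ t ∈ Set.Icc (0:ℝ) 1,
      mApp ((1 - t) • S' + t • S) (v t) = eigk ((1 - t) • S' + t • S) 1 • v t)
    (hsign : ∀ t ∈ Set.Icc (0:ℝ) 1, 0 ≤ ⟪v t, v 1⟫) :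
    ∀ t ∈ Set.Icc (0:ℝ) 1,
      ‖v t - v 0‖ ≤ (2 : ℝ) ^ ((5:ℝ)/2) * (eigk S 1 - eigk S 2)⁻¹ * opNorm (S' - S) := by
  intro t ht
  set ω := eigk S 1 - eigk S 2 with hωdef
  set ε := opNorm (S' - S) with hεdef
  have hε : 0 ≤ ε := norm_nonneg _
  have hω : 0 < ω := hgap
  have hsqrt2' : (0:ℝ) < Real.sqrt 2 := Real.sqrt_pos.2 (by norm_num)
  -- Σ_1 = S
  have hA1 : (1 - (1:ℝ)) • S' + (1:ℝ) • S = S := by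
    rw [sub_self, zero_smul, one_smul, zero_add]
  have h1mem : (1:ℝ) ∈ Set.Icc (0:ℝ) 1 := by norm_num
  have hev1 : mApp S (v 1) = eigk S 1 • v 1 := by
    have := heig 1 h1mem; rwa [hA1] at this
  have hv1 : ‖v 1‖ = 1 := hunit 1 h1mem
  -- key bound for any t in [0,1]
  have key : ∀ r ∈ Set.Icc (0:ℝ) 1, ‖v r - v 1‖ ≤ 2 * Real.sqrt 2 * ε / ω := by
    intro r hr
    set B := (1 - r) • S' + r • S with hBdef
    have hBsymm : B.IsSymm := by
      rw [hBdef, Matrix.IsSymm, Matrix.transpose_add, Matrix.transpose_smul,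
        Matrix.transpose_smul, hS.eq, hS'.eq]
    have hdiff : B - S = (1 - r) • (S' - S) := by
      rw [hBdef]
      module
    have hopn : opNorm (B - S) ≤ ε := by
      rw [hdiff, DKaux.opNorm_smul, ← hεdef]
      have : |1 - r| ≤ 1 := by
        rw [abs_le]; constructor <;> [linarith [hr.2]; linarith [hr.1]]
      nlinarith [hε]
    have hdk := DKaux.davis_kahan hS hBsymm hv1 (hunit r hr) hev1 (heig r hr)
      (hsign r hr) hgap
    calc ‖v r - v 1‖ ≤ 2 * Real.sqrt 2 * opNorm (B - S) / ω := hdk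
      _ ≤ 2 * Real.sqrt 2 * ε / ω := by
          have hnum : 2 * Real.sqrt 2 * opNorm (B - S) ≤ 2 * Real.sqrt 2 * ε :=
            mul_le_mul_of_nonneg_left hopn (by positivity)
          exact div_le_div_of_nonneg_right hnum hω.le
  -- conclude by triangle inequality
  have h0mem : (0:ℝ) ∈ Set.Icc (0:ℝ) 1 := by norm_num
  have k1 := key t ht
  have k2 : ‖v 1 - v 0‖ ≤ 2 * Real.sqrt 2 * ε / ω := by
    rw [norm_sub_rev]; exact key 0 h0mem
  have htri : ‖v t - v 0‖ ≤ ‖v t - v 1‖ + ‖v 1 - v 0‖ :=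
    norm_sub_le_norm_sub_add_norm_sub _ _ _
  have hpow : (2:ℝ) ^ ((5:ℝ)/2) = 4 * Real.sqrt 2 := by
    have h2 : (2:ℝ) ^ ((5:ℝ)/2) = (2:ℝ) ^ (2:ℝ) * (2:ℝ) ^ ((1:ℝ)/2) := by
      rw [← Real.rpow_add (by norm_num : (0:ℝ) < 2)]; norm_num
    have h3 : (2:ℝ) ^ (2:ℝ) = 4 := by
      rw [show (2:ℝ) = ((2:ℕ):ℝ) by norm_num]
      rw [Real.rpow_natCast]
      norm_num
    rw [h2, h3, ← Real.sqrt_eq_rpow]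
  rw [hpow]
  have : 4 * Real.sqrt 2 * ω⁻¹ * ε = 2 * Real.sqrt 2 * ε / ω + 2 * Real.sqrt 2 * ε / ω := by
    field_simp
    ring
  rw [this]
  linarith
end
end
end
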